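/- Let n ≥ 4 be an even integer, μ > 0, and let p, κ be real numbers satisfying p_0(n+μ) < p < p_Fuj((n+μ-1)/2), 0 < κ ≤ (n+μ-1)p/2 − (n+μ+1)/2, and κ > 2/(p−1) − (n+μ−1)/2, and set q = (n−1)p/2 − (n+1)/2. Assume in addition −1/2 ≤ q ≤ (n−3)/2 and p < p_Fuj(μ) = 1 + 2/μ. Let γ ∈ {0, 1/2}. Then there exists a constant C > 0 (depending only on n, μ, p, κ, γ) such that for all t ≥ 0 and r > 0, P_γ(t,r) := ∫_{τ=0}^{max(t−r,0)} ⟨τ⟩^{-μ(p-1)/2} ⟨t−τ−r⟩^{-q+p/2−1−γ} φ_κ(τ, (t−τ−r)/2)^p dτ ≤ C ⟨t−r⟩^{-κ−γ}. -/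
import Mathlib


open MeasureTheory Real

/-- Japanese bracket `⟨y⟩ = 1 + |y|`. -/
noncomputable def jb (y : ℝ) : ℝ := 1 + |y|

/-- Strauss exponent: positive root of `(N-1)p² - (N+1)p - 2 = 0`. -/
noncomputable def p0 (N : ℝ) : ℝ := (N + 1 + Real.sqrt (N ^ 2 + 10 * N - 7)) / (2 * (N - 1))

/-- Fujita exponent. -/
noncomputable def pFuj (N : ℝ) : ℝ := 1 + 2 / N

/-- The weight function `φ_κ(t,r) = ⟨t+r⟩^{-1/2} ⟨t-r⟩^{-κ}`. -/
noncomputable def phi (κ t r : ℝ) : ℝ := jb (t + r) ^ (-(1 / 2 : ℝ)) * jb (t - r) ^ (-κ)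

open intervalIntegral

lemma one_le_jb (y : ℝ) : 1 ≤ jb y := by simp [jb, abs_nonneg]
lemma jb_pos (y : ℝ) : 0 < jb y := lt_of_lt_of_le one_pos (one_le_jb y)
lemma jb_ne_zero (y : ℝ) : jb y ≠ 0 := (jb_pos y).ne'
lemma jb_neg' (y : ℝ) : jb (-y) = jb y := by simp [jb]
lemma jb_of_nonneg {y : ℝ} (h : 0 ≤ y) : jb y = 1 + y := by simp [jb, abs_of_nonneg h]
lemma continuous_jb : Continuous jb := continuous_const.add continuous_abs
lemma cont_jb_rpow (g : ℝ → ℝ) (hg : Continuous g) (e : ℝ) :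
    Continuous fun τ => jb (g τ) ^ e :=
  (continuous_jb.comp hg).rpow_const fun _ => Or.inl (jb_ne_zero _)
lemma jb_mono {x y : ℝ} (hx : 0 ≤ x) (h : x ≤ y) : jb x ≤ jb y := by
  simp only [jb, abs_of_nonneg hx, abs_of_nonneg (hx.trans h)]; linarith
lemma rpow_comparison {x y c : ℝ} (hx : 0 < x) (hy : 0 < y) (hc : 1 ≤ c)
    (h1 : x ≤ c * y) (h2 : y ≤ c * x) (e : ℝ) : x ^ e ≤ c ^ |e| * y ^ e := by
  have hc0 : 0 < c := lt_of_lt_of_le one_pos hc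
  rcases le_or_gt 0 e with he | he
  · rw [abs_of_nonneg he]
    calc x ^ e ≤ (c * y) ^ e := Real.rpow_le_rpow hx.le h1 he
    _ = c ^ e * y ^ e := Real.mul_rpow hc0.le hy.le
  · rw [abs_of_neg he]
    have hyc : y / c ≤ x := (div_le_iff₀' hc0).mpr h2
    calc x ^ e ≤ (y / c) ^ e :=
          Real.rpow_le_rpow_of_nonpos (div_pos hy hc0) hyc he.le
    _ = y ^ e / c ^ e := Real.div_rpow hy.le hc0.le e
    _ = c ^ (-e) * y ^ e := by rw [div_eq_mul_inv, ← Real.rpow_neg hc0.le]; ring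

lemma integral_jb_rpow {β : ℝ} (hβ : β < 1) {x : ℝ} (hx : 0 ≤ x) :
    ∫ u in (0:ℝ)..x, jb u ^ (-β) ≤ jb x ^ (1 - β) / (1 - β) := by
  have h1 : (∫ u in (0:ℝ)..x, jb u ^ (-β)) = ∫ u in (0:ℝ)..x, (1 + u) ^ (-β) := by
    apply intervalIntegral.integral_congr
    intro u hu
    rw [Set.uIcc_of_le hx] at hu
    show jb u ^ (-β) = (1 + u) ^ (-β)
    rw [jb_of_nonneg hu.1]
  have h2 : (∫ u in (0:ℝ)..x, (1 + u) ^ (-β)) = ∫ v in (1:ℝ)..(1+x), v ^ (-β) := by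
    simpa using intervalIntegral.integral_comp_add_left (a := 0) (b := x) (fun v => v ^ (-β)) 1
  have h3 : (∫ v in (1:ℝ)..(1+x), v ^ (-β)) = ((1+x) ^ (-β+1) - 1 ^ (-β+1)) / (-β+1) :=
    integral_rpow (Or.inl (by linarith))
  rw [h1, h2, h3, jb_of_nonneg hx, Real.one_rpow]
  have h4 : 0 < 1 - β := by linarith
  rw [div_le_div_iff₀ (by linarith) h4]
  have h5 : (1+x) ^ (-β+1) = (1+x) ^ (1-β) := by ring_nf
  rw [h5]
  nlinarith [Real.rpow_nonneg (by linarith : (0:ℝ) ≤ 1 + x) (1-β)]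

lemma integral_jb_rpow' (β : ℝ) {δ : ℝ} (hδ : 0 < δ) (hδ1 : δ < 1) {x : ℝ} (hx : 0 ≤ x) :
    ∫ u in (0:ℝ)..x, jb u ^ (-β) ≤ (1/δ) * jb x ^ max (1 - β) δ := by
  rcases le_total β (1 - δ) with h | h
  · have hm : max (1 - β) δ = 1 - β := max_eq_left (by linarith)
    rw [hm]
    refine (integral_jb_rpow (by linarith) hx).trans ?_
    rw [div_eq_mul_inv, mul_comm, one_div]
    gcongr
    · exact Real.rpow_nonneg (jb_pos x).le _
    · linarith
  · have hm : max (1 - β) δ = δ := max_eq_right (by linarith)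
    rw [hm]
    have step : (∫ u in (0:ℝ)..x, jb u ^ (-β)) ≤ ∫ u in (0:ℝ)..x, jb u ^ (-(1-δ)) := by
      apply intervalIntegral.integral_mono_on hx
        ((cont_jb_rpow id continuous_id _).intervalIntegrable _ _)
        ((cont_jb_rpow id continuous_id _).intervalIntegrable _ _)
      intro u _
      exact Real.rpow_le_rpow_of_exponent_le (one_le_jb u) (by linarith)
    refine step.trans ((integral_jb_rpow (by linarith) hx).trans ?_)
    have h6 : (1:ℝ) - (1 - δ) = δ := by ring
    rw [h6, div_eq_mul_inv, mul_comm, one_div]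

lemma conv_bound (α β : ℝ) {δ : ℝ} (hδ : 0 < δ) (hδ1 : δ < 1) {s : ℝ} (hs : 0 ≤ s) :
    ∫ τ in (0:ℝ)..s, jb τ ^ (-α) * jb (s - τ) ^ (-β)
      ≤ (2 ^ |β| / δ) * jb s ^ (-β + max (1-α) δ)
        + (2 ^ |α| / δ) * jb s ^ (-α + max (1-β) δ) := by
  have hcont : ∀ (α' β' : ℝ), Continuous fun τ => jb τ ^ (-α') * jb (s - τ) ^ (-β') :=
    fun α' β' => (cont_jb_rpow id continuous_id _).mul
      (cont_jb_rpow (fun τ => s - τ) (continuous_const.sub continuous_id) _)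
  have half : ∀ α' β' : ℝ, (∫ τ in (0:ℝ)..s/2, jb τ ^ (-α') * jb (s - τ) ^ (-β'))
      ≤ (2 ^ |β'| / δ) * jb s ^ (-β' + max (1-α') δ) := by
    intro α' β'
    have key : ∀ τ ∈ Set.Icc (0:ℝ) (s/2),
        jb τ ^ (-α') * jb (s - τ) ^ (-β')
          ≤ (2 ^ |β'| * jb s ^ (-β')) * jb τ ^ (-α') := by
      intro τ hτ
      have h0τ : 0 ≤ τ := hτ.1
      have hτ2 : τ ≤ s/2 := hτ.2
      have hst : (0:ℝ) ≤ s - τ := by linarith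
      have hb : jb (s - τ) ^ (-β') ≤ 2 ^ |β'| * jb s ^ (-β') := by
        have e1 : jb (s - τ) ≤ 2 * jb s := by
          rw [jb_of_nonneg hst, jb_of_nonneg hs]; linarith
        have e2 : jb s ≤ 2 * jb (s - τ) := by
          rw [jb_of_nonneg hst, jb_of_nonneg hs]; linarith
        have := rpow_comparison (jb_pos (s-τ)) (jb_pos s) one_le_two e1 e2 (-β')
        rwa [abs_neg] at this
      calc jb τ ^ (-α') * jb (s - τ) ^ (-β')
          ≤ jb τ ^ (-α') * (2 ^ |β'| * jb s ^ (-β')) := by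
            apply mul_le_mul_of_nonneg_left hb (Real.rpow_nonneg (jb_pos τ).le _)
        _ = (2 ^ |β'| * jb s ^ (-β')) * jb τ ^ (-α') := by ring
    have step : (∫ τ in (0:ℝ)..s/2, jb τ ^ (-α') * jb (s - τ) ^ (-β'))
        ≤ ∫ τ in (0:ℝ)..s/2, (2 ^ |β'| * jb s ^ (-β')) * jb τ ^ (-α') :=
      intervalIntegral.integral_mono_on (by linarith) ((hcont α' β').intervalIntegrable _ _)
        ((continuous_const.mul (cont_jb_rpow id continuous_id _)).intervalIntegrable _ _) key
    rw [intervalIntegral.integral_const_mul] at step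
    refine step.trans ?_
    have h2 : (∫ τ in (0:ℝ)..s/2, jb τ ^ (-α')) ≤ (1/δ) * jb (s/2) ^ max (1-α') δ :=
      integral_jb_rpow' _ hδ hδ1 (by linarith)
    have h3 : jb (s/2) ^ max (1-α') δ ≤ jb s ^ max (1-α') δ :=
      Real.rpow_le_rpow (jb_pos _).le (jb_mono (by linarith) (by linarith))
        (le_trans hδ.le (le_max_right _ _))
    have h4 : (0:ℝ) ≤ 2 ^ |β'| * jb s ^ (-β') :=
      mul_nonneg (Real.rpow_nonneg (by norm_num) _) (Real.rpow_nonneg (jb_pos s).le _)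
    calc 2 ^ |β'| * jb s ^ (-β') * ∫ τ in (0:ℝ)..s/2, jb τ ^ (-α')
        ≤ 2 ^ |β'| * jb s ^ (-β') * ((1/δ) * jb s ^ max (1-α') δ) := by
          apply mul_le_mul_of_nonneg_left (h2.trans (by
            apply mul_le_mul_of_nonneg_left h3 (by positivity))) h4
      _ = (2 ^ |β'| / δ) * jb s ^ (-β' + max (1-α') δ) := by
          rw [Real.rpow_add (jb_pos s)]; ring
  have hsplit : (∫ τ in (0:ℝ)..s, jb τ ^ (-α) * jb (s - τ) ^ (-β))
      = (∫ τ in (0:ℝ)..s/2, jb τ ^ (-α) * jb (s - τ) ^ (-β))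
        + ∫ τ in (s/2)..s, jb τ ^ (-α) * jb (s - τ) ^ (-β) :=
    (intervalIntegral.integral_add_adjacent_intervals
      ((hcont α β).intervalIntegrable _ _) ((hcont α β).intervalIntegrable _ _)).symm
  have hsub : (∫ τ in (s/2)..s, jb τ ^ (-α) * jb (s - τ) ^ (-β))
      = ∫ u in (0:ℝ)..s/2, jb u ^ (-β) * jb (s - u) ^ (-α) := by
    have := intervalIntegral.integral_comp_sub_left (a := s/2) (b := s)
      (fun u => jb u ^ (-β) * jb (s - u) ^ (-α)) s
    simp only [sub_self, sub_half] at this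
    rw [← this]
    apply intervalIntegral.integral_congr
    intro τ _
    show jb τ ^ (-α) * jb (s - τ) ^ (-β) = jb (s - τ) ^ (-β) * jb (s - (s - τ)) ^ (-α)
    rw [sub_sub_cancel]; ring
  rw [hsplit, hsub]
  exact add_le_add (half α β) (half β α)

lemma pieceA (a b B : ℝ) {δ : ℝ} (hδ : 0 < δ) (hδ1 : δ < 1) :
    ∃ K, 0 < K ∧ ∀ s : ℝ, 0 ≤ s →
      (∫ τ in (0:ℝ)..(s/3), jb τ ^ (-a) * jb (s - τ) ^ b * jb ((3*τ - s)/2) ^ (-B))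
        ≤ K * (jb s ^ (b - B + max (1-a) δ) + jb s ^ (b - a + max (1-B) δ)) := by
  refine ⟨(2^|b| * 2^|B| * 3^|a|) * (2^|B|/δ + 2^|a|/δ), by positivity, ?_⟩
  intro s hs
  have hjb : (0:ℝ) < jb s ^ b := Real.rpow_pos_of_pos (jb_pos s) b
  have hcont1 : Continuous fun τ => jb τ ^ (-a) * jb (s - τ) ^ b * jb ((3*τ - s)/2) ^ (-B) :=
    ((cont_jb_rpow id continuous_id _).mul
      (cont_jb_rpow (fun τ => s - τ) (continuous_const.sub continuous_id) _)).mul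
      (cont_jb_rpow (fun τ => (3*τ - s)/2) (((continuous_const.mul continuous_id).sub continuous_const).div_const 2) _)
  have hcont2 : Continuous fun τ : ℝ => jb τ ^ (-a) * jb (s - 3*τ) ^ (-B) :=
    (cont_jb_rpow id continuous_id _).mul
      (cont_jb_rpow (fun τ => s - 3*τ) (continuous_const.sub (continuous_const.mul continuous_id)) _)
  have hpt : ∀ τ ∈ Set.Icc (0:ℝ) (s/3),
      jb τ ^ (-a) * jb (s - τ) ^ b * jb ((3*τ - s)/2) ^ (-B)
        ≤ (2^|b| * jb s ^ b * 2^|B|) * (jb τ ^ (-a) * jb (s - 3*τ) ^ (-B)) := by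
    intro τ hτ
    have h0 : 0 ≤ τ := hτ.1
    have h3 : τ ≤ s/3 := hτ.2
    have hst : (0:ℝ) ≤ s - τ := by linarith
    have hs3 : (0:ℝ) ≤ s - 3*τ := by linarith
    have hs32 : (0:ℝ) ≤ (s - 3*τ)/2 := by linarith
    have hb : jb (s - τ) ^ b ≤ 2^|b| * jb s ^ b := by
      apply rpow_comparison (jb_pos _) (jb_pos _) one_le_two
      · rw [jb_of_nonneg hst, jb_of_nonneg hs]; linarith
      · rw [jb_of_nonneg hst, jb_of_nonneg hs]; linarith
    have hc : jb ((3*τ - s)/2) ^ (-B) ≤ 2^|B| * jb (s - 3*τ) ^ (-B) := by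
      have hj : jb ((3*τ - s)/2) = jb ((s - 3*τ)/2) := by
        rw [show (3*τ-s)/2 = -((s-3*τ)/2) by ring, jb_neg']
      rw [hj]
      have h1 : jb ((s-3*τ)/2) ≤ 2 * jb (s-3*τ) := by
        rw [jb_of_nonneg hs32, jb_of_nonneg hs3]; linarith
      have h2 : jb (s-3*τ) ≤ 2 * jb ((s-3*τ)/2) := by
        rw [jb_of_nonneg hs32, jb_of_nonneg hs3]; linarith
      have := rpow_comparison (jb_pos ((s-3*τ)/2)) (jb_pos (s-3*τ)) one_le_two h1 h2 (-B)
      rwa [abs_neg] at this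
    calc jb τ ^ (-a) * jb (s - τ) ^ b * jb ((3*τ - s)/2) ^ (-B)
        ≤ jb τ ^ (-a) * (2^|b| * jb s ^ b) * (2^|B| * jb (s - 3*τ) ^ (-B)) := by
          apply mul_le_mul (mul_le_mul_of_nonneg_left hb (Real.rpow_nonneg (jb_pos τ).le _)) hc
            (Real.rpow_nonneg (jb_pos _).le _)
          exact mul_nonneg (Real.rpow_nonneg (jb_pos τ).le (-a))
            (mul_nonneg (Real.rpow_nonneg (by norm_num) _) hjb.le)
      _ = (2^|b| * jb s ^ b * 2^|B|) * (jb τ ^ (-a) * jb (s - 3*τ) ^ (-B)) := by ring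
  have step1 : (∫ τ in (0:ℝ)..(s/3), jb τ ^ (-a) * jb (s - τ) ^ b * jb ((3*τ - s)/2) ^ (-B))
      ≤ ∫ τ in (0:ℝ)..(s/3), (2^|b| * jb s ^ b * 2^|B|) * (jb τ ^ (-a) * jb (s - 3*τ) ^ (-B)) :=
    intervalIntegral.integral_mono_on (by linarith) (hcont1.intervalIntegrable _ _)
      ((continuous_const.mul hcont2).intervalIntegrable _ _) hpt
  rw [intervalIntegral.integral_const_mul] at step1
  have hsub : (∫ τ in (0:ℝ)..(s/3), jb τ ^ (-a) * jb (s - 3*τ) ^ (-B))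
      = (3:ℝ)⁻¹ * ∫ u in (0:ℝ)..s, jb (u/3) ^ (-a) * jb (s - u) ^ (-B) := by
    have h := intervalIntegral.integral_comp_mul_left (a := (0:ℝ)) (b := s/3)
      (f := fun u => jb (u/3) ^ (-a) * jb (s - u) ^ (-B)) (c := (3:ℝ)) (by norm_num)
    rw [show (3:ℝ) * 0 = 0 by norm_num, show (3:ℝ) * (s/3) = s by ring, smul_eq_mul] at h
    rw [← h]
    apply intervalIntegral.integral_congr
    intro τ _
    show jb τ ^ (-a) * jb (s - 3*τ) ^ (-B) = jb (3*τ/3) ^ (-a) * jb (s - 3*τ) ^ (-B)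
    rw [show (3:ℝ)*τ/3 = τ by ring]
  have step2 : (∫ u in (0:ℝ)..s, jb (u/3) ^ (-a) * jb (s - u) ^ (-B))
      ≤ 3^|a| * ∫ u in (0:ℝ)..s, jb u ^ (-a) * jb (s - u) ^ (-B) := by
    rw [← intervalIntegral.integral_const_mul]
    apply intervalIntegral.integral_mono_on hs
      (((cont_jb_rpow (fun u => u/3) (continuous_id.div_const 3) _).mul
        (cont_jb_rpow (fun u => s - u) (continuous_const.sub continuous_id) _)).intervalIntegrable _ _)
      ((continuous_const.mul ((cont_jb_rpow id continuous_id _).mul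
        (cont_jb_rpow (fun u => s - u) (continuous_const.sub continuous_id) _))).intervalIntegrable _ _)
    intro u hu
    have h0 : 0 ≤ u := hu.1
    have ha : jb (u/3) ^ (-a) ≤ 3^|a| * jb u ^ (-a) := by
      have hu3 : (0:ℝ) ≤ u/3 := by linarith
      have h1 : jb (u/3) ≤ 3 * jb u := by
        rw [jb_of_nonneg hu3, jb_of_nonneg h0]; linarith
      have h2 : jb u ≤ 3 * jb (u/3) := by
        rw [jb_of_nonneg hu3, jb_of_nonneg h0]; linarith
      have := rpow_comparison (jb_pos (u/3)) (jb_pos u) (by norm_num) h1 h2 (-a)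
      rwa [abs_neg] at this
    calc jb (u/3) ^ (-a) * jb (s - u) ^ (-B)
        ≤ (3^|a| * jb u ^ (-a)) * jb (s - u) ^ (-B) :=
          mul_le_mul_of_nonneg_right ha (Real.rpow_nonneg (jb_pos _).le _)
      _ = 3^|a| * (jb u ^ (-a) * jb (s - u) ^ (-B)) := by ring
  have step3 := conv_bound a B hδ hδ1 hs
  -- combine
  have Y1 := Real.rpow_nonneg (jb_pos s).le (-B + max (1-a) δ)
  have Y2 := Real.rpow_nonneg (jb_pos s).le (-a + max (1-B) δ)
  have c1 : (0:ℝ) ≤ 2^|B|/δ := by positivity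
  have c2 : (0:ℝ) ≤ 2^|a|/δ := by positivity
  have hM : (0:ℝ) ≤ 2^|b| * jb s ^ b * 2^|B| := by positivity
  have hInn : (0:ℝ) ≤ ∫ u in (0:ℝ)..s, jb (u/3) ^ (-a) * jb (s - u) ^ (-B) := by
    apply intervalIntegral.integral_nonneg hs
    intro u _
    exact mul_nonneg (Real.rpow_nonneg (jb_pos _).le _) (Real.rpow_nonneg (jb_pos _).le _)
  have hflat1 : jb s ^ (b - B + max (1-a) δ) = jb s ^ b * jb s ^ (-B + max (1-a) δ) := by
    rw [← Real.rpow_add (jb_pos s)]; ring_nf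
  have hflat2 : jb s ^ (b - a + max (1-B) δ) = jb s ^ b * jb s ^ (-a + max (1-B) δ) := by
    rw [← Real.rpow_add (jb_pos s)]; ring_nf
  calc (∫ τ in (0:ℝ)..(s/3), jb τ ^ (-a) * jb (s - τ) ^ b * jb ((3*τ - s)/2) ^ (-B))
      ≤ (2^|b| * jb s ^ b * 2^|B|) * ∫ τ in (0:ℝ)..(s/3), jb τ ^ (-a) * jb (s - 3*τ) ^ (-B) := step1
    _ = (2^|b| * jb s ^ b * 2^|B|) * ((3:ℝ)⁻¹ * ∫ u in (0:ℝ)..s, jb (u/3) ^ (-a) * jb (s - u) ^ (-B)) := by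
        rw [hsub]
    _ ≤ (2^|b| * jb s ^ b * 2^|B|) * ((3:ℝ)⁻¹ * (3^|a| *
          ((2^|B|/δ) * jb s ^ (-B + max (1-a) δ) + (2^|a|/δ) * jb s ^ (-a + max (1-B) δ)))) := by
        apply mul_le_mul_of_nonneg_left _ hM
        apply mul_le_mul_of_nonneg_left _ (by norm_num)
        refine step2.trans ?_
        apply mul_le_mul_of_nonneg_left step3 (by positivity)
    _ ≤ ((2^|b| * 2^|B| * 3^|a|) * (2^|B|/δ + 2^|a|/δ)) *
          (jb s ^ (b - B + max (1-a) δ) + jb s ^ (b - a + max (1-B) δ)) := by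
        rw [hflat1, hflat2]
        have e1 : (0:ℝ) ≤ 2^|b| := Real.rpow_nonneg (by norm_num) _
        have e2 : (0:ℝ) ≤ 2^|B| := Real.rpow_nonneg (by norm_num) _
        have e3 : (0:ℝ) ≤ 3^|a| := Real.rpow_nonneg (by norm_num) _
        nlinarith [mul_nonneg (mul_nonneg (mul_nonneg e1 e2) e3) (mul_nonneg hjb.le (mul_nonneg c1 Y2)),
          mul_nonneg (mul_nonneg (mul_nonneg e1 e2) e3) (mul_nonneg hjb.le (mul_nonneg c2 Y1)),
          mul_nonneg (mul_nonneg (mul_nonneg e1 e2) e3) (mul_nonneg hjb.le (mul_nonneg c1 Y1)),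
          mul_nonneg (mul_nonneg (mul_nonneg e1 e2) e3) (mul_nonneg hjb.le (mul_nonneg c2 Y2))]

lemma pieceB (a b B : ℝ) (hB : 0 ≤ B) {δ : ℝ} (hδ : 0 < δ) (hδ1 : δ < 1) :
    ∃ K, 0 < K ∧ ∀ s : ℝ, 0 ≤ s →
      (∫ τ in (s/3)..s, jb τ ^ (-a) * jb (s - τ) ^ b * jb ((3*τ - s)/2) ^ (-B))
        ≤ K * (jb s ^ (-a + b + max (1-B) δ) + jb s ^ (-a - B + max (1+b) δ)) := by
  refine ⟨3^|a| * ((2^|b|/δ) * (3/2)^|b + max (1-B) δ| + (2^|B|/δ) * (3/2)^|(-B) + max (1+b) δ|),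
    by positivity, ?_⟩
  intro s hs
  have hja : (0:ℝ) < jb s ^ (-a) := Real.rpow_pos_of_pos (jb_pos s) _
  have hs' : (0:ℝ) ≤ s - s/3 := by linarith
  have hcont1 : Continuous fun τ => jb τ ^ (-a) * jb (s - τ) ^ b * jb ((3*τ - s)/2) ^ (-B) :=
    ((cont_jb_rpow id continuous_id _).mul
      (cont_jb_rpow (fun τ => s - τ) (continuous_const.sub continuous_id) _)).mul
      (cont_jb_rpow (fun τ => (3*τ - s)/2) (((continuous_const.mul continuous_id).sub continuous_const).div_const 2) _)
  have hcont2 : Continuous fun τ : ℝ => jb (τ - s/3) ^ (-B) * jb (s - τ) ^ b :=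
    (cont_jb_rpow (fun τ => τ - s/3) (continuous_id.sub continuous_const) _).mul
      (cont_jb_rpow (fun τ => s - τ) (continuous_const.sub continuous_id) _)
  have hpt : ∀ τ ∈ Set.Icc (s/3) s,
      jb τ ^ (-a) * jb (s - τ) ^ b * jb ((3*τ - s)/2) ^ (-B)
        ≤ (3^|a| * jb s ^ (-a)) * (jb (τ - s/3) ^ (-B) * jb (s - τ) ^ b) := by
    intro τ hτ
    have h1 : s/3 ≤ τ := hτ.1
    have h2 : τ ≤ s := hτ.2
    have h0 : (0:ℝ) ≤ τ := le_trans (by linarith) h1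
    have ht3 : (0:ℝ) ≤ τ - s/3 := by linarith
    have ha : jb τ ^ (-a) ≤ 3^|a| * jb s ^ (-a) := by
      have e1 : jb τ ≤ 3 * jb s := by
        rw [jb_of_nonneg h0, jb_of_nonneg hs]; linarith
      have e2 : jb s ≤ 3 * jb τ := by
        rw [jb_of_nonneg h0, jb_of_nonneg hs]; linarith
      have := rpow_comparison (jb_pos τ) (jb_pos s) (by norm_num) e1 e2 (-a)
      rwa [abs_neg] at this
    have hc : jb ((3*τ - s)/2) ^ (-B) ≤ jb (τ - s/3) ^ (-B) := by
      apply Real.rpow_le_rpow_of_nonpos (jb_pos _) _ (neg_nonpos.mpr hB)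
      apply jb_mono ht3
      linarith
    calc jb τ ^ (-a) * jb (s - τ) ^ b * jb ((3*τ - s)/2) ^ (-B)
        ≤ (3^|a| * jb s ^ (-a)) * jb (s - τ) ^ b * jb (τ - s/3) ^ (-B) := by
          apply mul_le_mul
          · exact mul_le_mul_of_nonneg_right ha (Real.rpow_nonneg (jb_pos _).le _)
          · exact hc
          · exact Real.rpow_nonneg (jb_pos _).le _
          · exact mul_nonneg (mul_nonneg (Real.rpow_nonneg (by norm_num) _) hja.le)
              (Real.rpow_nonneg (jb_pos _).le _)
      _ = (3^|a| * jb s ^ (-a)) * (jb (τ - s/3) ^ (-B) * jb (s - τ) ^ b) := by ring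
  have step1 : (∫ τ in (s/3)..s, jb τ ^ (-a) * jb (s - τ) ^ b * jb ((3*τ - s)/2) ^ (-B))
      ≤ ∫ τ in (s/3)..s, (3^|a| * jb s ^ (-a)) * (jb (τ - s/3) ^ (-B) * jb (s - τ) ^ b) :=
    intervalIntegral.integral_mono_on (by linarith) (hcont1.intervalIntegrable _ _)
      ((continuous_const.mul hcont2).intervalIntegrable _ _) hpt
  rw [intervalIntegral.integral_const_mul] at step1
  have hshift : (∫ τ in (s/3)..s, jb (τ - s/3) ^ (-B) * jb (s - τ) ^ b)
      = ∫ w in (0:ℝ)..(s - s/3), jb w ^ (-B) * jb ((s - s/3) - w) ^ b := by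
    have h := intervalIntegral.integral_comp_sub_right (a := s/3) (b := s)
      (f := fun w => jb w ^ (-B) * jb ((s - s/3) - w) ^ b) (s/3)
    rw [sub_self] at h
    rw [← h]
    apply intervalIntegral.integral_congr
    intro τ _
    show jb (τ - s/3) ^ (-B) * jb (s - τ) ^ b
      = jb (τ - s/3) ^ (-B) * jb ((s - s/3) - (τ - s/3)) ^ b
    rw [show (s - s/3) - (τ - s/3) = s - τ by ring]
  have step2 := conv_bound B (-b) hδ hδ1 hs'
  rw [neg_neg, abs_neg, show (1:ℝ) - -b = 1 + b by ring] at step2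
  have hcomp : ∀ e : ℝ, jb (s - s/3) ^ e ≤ (3/2)^|e| * jb s ^ e := by
    intro e
    apply rpow_comparison (jb_pos _) (jb_pos _) (by norm_num)
    · rw [jb_of_nonneg hs', jb_of_nonneg hs]; linarith
    · rw [jb_of_nonneg hs', jb_of_nonneg hs]; linarith
  have Y1 := Real.rpow_nonneg (jb_pos s).le (b + max (1-B) δ)
  have Y2 := Real.rpow_nonneg (jb_pos s).le (-B + max (1+b) δ)
  have hflat1 : jb s ^ (-a + b + max (1-B) δ) = jb s ^ (-a) * jb s ^ (b + max (1-B) δ) := by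
    rw [← Real.rpow_add (jb_pos s)]; ring_nf
  have hflat2 : jb s ^ (-a - B + max (1+b) δ) = jb s ^ (-a) * jb s ^ (-B + max (1+b) δ) := by
    rw [← Real.rpow_add (jb_pos s)]; ring_nf
  have c1 : (0:ℝ) ≤ (2^|b|/δ) * (3/2)^|b + max (1-B) δ| := by positivity
  have c2 : (0:ℝ) ≤ (2^|B|/δ) * (3/2)^|(-B) + max (1+b) δ| := by positivity
  have e3 : (0:ℝ) ≤ 3^|a| := Real.rpow_nonneg (by norm_num) _
  calc (∫ τ in (s/3)..s, jb τ ^ (-a) * jb (s - τ) ^ b * jb ((3*τ - s)/2) ^ (-B))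
      ≤ (3^|a| * jb s ^ (-a)) * ∫ τ in (s/3)..s, jb (τ - s/3) ^ (-B) * jb (s - τ) ^ b := step1
    _ = (3^|a| * jb s ^ (-a)) *
          ∫ w in (0:ℝ)..(s - s/3), jb w ^ (-B) * jb ((s - s/3) - w) ^ b := by rw [hshift]
    _ ≤ (3^|a| * jb s ^ (-a)) *
          ((2^|b|/δ) * jb (s - s/3) ^ (b + max (1-B) δ)
            + (2^|B|/δ) * jb (s - s/3) ^ (-B + max (1+b) δ)) :=
        mul_le_mul_of_nonneg_left step2 (mul_nonneg e3 hja.le)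
    _ ≤ (3^|a| * jb s ^ (-a)) *
          (((2^|b|/δ) * (3/2)^|b + max (1-B) δ|) * jb s ^ (b + max (1-B) δ)
            + ((2^|B|/δ) * (3/2)^|(-B) + max (1+b) δ|) * jb s ^ (-B + max (1+b) δ)) := by
        apply mul_le_mul_of_nonneg_left _ (mul_nonneg e3 hja.le)
        have u1 := mul_le_mul_of_nonneg_left (hcomp (b + max (1-B) δ)) (by positivity : (0:ℝ) ≤ 2^|b|/δ)
        have u2 := mul_le_mul_of_nonneg_left (hcomp (-B + max (1+b) δ)) (by positivity : (0:ℝ) ≤ 2^|B|/δ)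
        calc (2^|b|/δ) * jb (s - s/3) ^ (b + max (1-B) δ)
              + (2^|B|/δ) * jb (s - s/3) ^ (-B + max (1+b) δ)
            ≤ (2^|b|/δ) * ((3/2)^|b + max (1-B) δ| * jb s ^ (b + max (1-B) δ))
              + (2^|B|/δ) * ((3/2)^|(-B) + max (1+b) δ| * jb s ^ (-B + max (1+b) δ)) :=
              add_le_add u1 u2
          _ = ((2^|b|/δ) * (3/2)^|b + max (1-B) δ|) * jb s ^ (b + max (1-B) δ)
              + ((2^|B|/δ) * (3/2)^|(-B) + max (1+b) δ|) * jb s ^ (-B + max (1+b) δ) := by ring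
    _ ≤ (3^|a| * ((2^|b|/δ) * (3/2)^|b + max (1-B) δ| + (2^|B|/δ) * (3/2)^|(-B) + max (1+b) δ|)) *
          (jb s ^ (-a + b + max (1-B) δ) + jb s ^ (-a - B + max (1+b) δ)) := by
        rw [hflat1, hflat2]
        nlinarith [mul_nonneg e3 (mul_nonneg hja.le (mul_nonneg c1 Y2)),
          mul_nonneg e3 (mul_nonneg hja.le (mul_nonneg c2 Y1))]

lemma key (μ p κ q γ : ℝ) (hμ : 0 < μ) (hp : 1 < p) (hκ : 0 < κ)
    (hκqa : κ ≤ q + μ * (p - 1) / 2) (hq₀ : -(1/2:ℝ) ≤ q) (hγ0 : 0 ≤ γ) (hγ1 : γ ≤ 1/2) :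
    ∃ C, 0 < C ∧ ∀ s : ℝ, 0 ≤ s →
      (∫ τ in (0:ℝ)..s, jb τ ^ (-(μ * (p - 1) / 2)) * jb (s - τ) ^ (-q + p / 2 - 1 - γ) *
          phi κ τ ((s - τ) / 2) ^ p) ≤ C * jb s ^ (-κ - γ) := by
  have hδ0 : 0 < min ((p-1)/2) (1/2:ℝ) := lt_min (by linarith) (by norm_num)
  have hδ1 : min ((p-1)/2) (1/2:ℝ) < 1 := lt_of_le_of_lt (min_le_right _ _) (by norm_num)
  set δ := min ((p-1)/2) (1/2:ℝ) with hδdef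
  have hδh : δ ≤ 1/2 := min_le_right _ _
  have hδb : δ ≤ (p-1)/2 := min_le_left _ _
  have ha0 : 0 < μ * (p - 1) / 2 := by
    have : 0 < p - 1 := by linarith
    positivity
  have hκp : 0 < κ*p - κ := by nlinarith
  have hκp0 : 0 < κ*p := by nlinarith
  obtain ⟨K1, hK1, hA⟩ := pieceA (μ * (p - 1) / 2) (-q + p / 2 - 1 - γ) (κ*p) hδ0 hδ1
  obtain ⟨K2, hK2, hB2⟩ := pieceB (μ * (p - 1) / 2) (-q + p / 2 - 1 - γ) (κ*p) hκp0.le hδ0 hδ1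
  refine ⟨(2:ℝ)^(p/2) * (2*K1 + 2*K2), by positivity, ?_⟩
  intro s hs
  -- exponent inequalities
  have hf1 : -(p/2) + ((-q + p / 2 - 1 - γ) - κ*p + max (1 - μ * (p - 1) / 2) δ) ≤ -κ - γ := by
    have h := max_le (show (1:ℝ) - μ * (p - 1) / 2 ≤ κ*p - κ + q + 1 by linarith)
      (show δ ≤ κ*p - κ + q + 1 by linarith)
    linarith
  have hf2 : -(p/2) + ((-q + p / 2 - 1 - γ) - μ * (p - 1) / 2 + max (1 - κ*p) δ) ≤ -κ - γ := by
    have h := max_le (show (1:ℝ) - κ*p ≤ q + 1 + μ * (p - 1) / 2 - κ by linarith)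
      (show δ ≤ q + 1 + μ * (p - 1) / 2 - κ by linarith)
    linarith
  have hf3 : -(p/2) + (-(μ * (p - 1) / 2) + (-q + p / 2 - 1 - γ) + max (1 - κ*p) δ) ≤ -κ - γ := by
    have h := max_le (show (1:ℝ) - κ*p ≤ q + 1 + μ * (p - 1) / 2 - κ by linarith)
      (show δ ≤ q + 1 + μ * (p - 1) / 2 - κ by linarith)
    linarith
  have hf4 : -(p/2) + (-(μ * (p - 1) / 2) - κ*p + max (1 + (-q + p / 2 - 1 - γ)) δ) ≤ -κ - γ := by
    have h := max_le (show (1:ℝ) + (-q + p / 2 - 1 - γ) ≤ p/2 - γ + μ * (p - 1) / 2 + (κ*p - κ) by linarith)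
      (show δ ≤ p/2 - γ + μ * (p - 1) / 2 + (κ*p - κ) by linarith)
    linarith
  -- continuity of integrands
  have hgcont : Continuous fun τ => jb τ ^ (-(μ * (p - 1) / 2)) *
      jb (s - τ) ^ (-q + p / 2 - 1 - γ) * jb ((3*τ - s)/2) ^ (-(κ*p)) :=
    ((cont_jb_rpow id continuous_id _).mul
      (cont_jb_rpow (fun τ => s - τ) (continuous_const.sub continuous_id) _)).mul
      (cont_jb_rpow (fun τ => (3*τ - s)/2) (((continuous_const.mul continuous_id).sub continuous_const).div_const 2) _)
  have hφcont : Continuous fun τ => jb τ ^ (-(μ * (p - 1) / 2)) *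
      jb (s - τ) ^ (-q + p / 2 - 1 - γ) * phi κ τ ((s - τ) / 2) ^ p := by
    apply ((cont_jb_rpow id continuous_id _).mul
      (cont_jb_rpow (fun τ => s - τ) (continuous_const.sub continuous_id) _)).mul
    apply Continuous.rpow_const _ (fun x => Or.inr (by linarith))
    apply Continuous.mul
    · exact cont_jb_rpow (fun τ => τ + (s - τ)/2) (continuous_id.add ((continuous_const.sub continuous_id).div_const 2)) _
    · exact cont_jb_rpow (fun τ => τ - (s - τ)/2) (continuous_id.sub ((continuous_const.sub continuous_id).div_const 2)) _
  -- pointwise reduction of phi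
  have hpt : ∀ τ ∈ Set.Icc (0:ℝ) s,
      jb τ ^ (-(μ * (p - 1) / 2)) * jb (s - τ) ^ (-q + p / 2 - 1 - γ) * phi κ τ ((s - τ) / 2) ^ p
        ≤ ((2:ℝ)^(p/2) * jb s ^ (-(p/2))) * (jb τ ^ (-(μ * (p - 1) / 2)) *
            jb (s - τ) ^ (-q + p / 2 - 1 - γ) * jb ((3*τ - s)/2) ^ (-(κ*p))) := by
    intro τ hτ
    have h0 : 0 ≤ τ := hτ.1
    have h2 : τ ≤ s := hτ.2
    have hst2 : (0:ℝ) ≤ (s + τ)/2 := by linarith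
    have hphi : phi κ τ ((s - τ) / 2) ^ p
        = jb ((s + τ)/2) ^ (-(p/2)) * jb ((3*τ - s)/2) ^ (-(κ*p)) := by
      rw [phi, show τ + (s - τ)/2 = (s + τ)/2 by ring, show τ - (s - τ)/2 = (3*τ - s)/2 by ring,
        Real.mul_rpow (Real.rpow_nonneg (jb_pos _).le _) (Real.rpow_nonneg (jb_pos _).le _),
        ← Real.rpow_mul (jb_pos _).le, ← Real.rpow_mul (jb_pos _).le,
        show -(1/2:ℝ) * p = -(p/2) by ring, show -κ * p = -(κ*p) by ring]
    have hsb : jb ((s + τ)/2) ^ (-(p/2)) ≤ (2:ℝ)^(p/2) * jb s ^ (-(p/2)) := by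
      have e1 : jb ((s + τ)/2) ≤ 2 * jb s := by
        rw [jb_of_nonneg hst2, jb_of_nonneg hs]; linarith
      have e2 : jb s ≤ 2 * jb ((s + τ)/2) := by
        rw [jb_of_nonneg hst2, jb_of_nonneg hs]; linarith
      have := rpow_comparison (jb_pos ((s + τ)/2)) (jb_pos s) one_le_two e1 e2 (-(p/2))
      rwa [abs_neg, abs_of_nonneg (by linarith : (0:ℝ) ≤ p/2)] at this
    have hgnn : (0:ℝ) ≤ jb τ ^ (-(μ * (p - 1) / 2)) *
        jb (s - τ) ^ (-q + p / 2 - 1 - γ) * jb ((3*τ - s)/2) ^ (-(κ*p)) :=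
      mul_nonneg (mul_nonneg (Real.rpow_nonneg (jb_pos _).le _)
        (Real.rpow_nonneg (jb_pos _).le _)) (Real.rpow_nonneg (jb_pos _).le _)
    calc jb τ ^ (-(μ * (p - 1) / 2)) * jb (s - τ) ^ (-q + p / 2 - 1 - γ) * phi κ τ ((s - τ) / 2) ^ p
        = jb ((s + τ)/2) ^ (-(p/2)) * (jb τ ^ (-(μ * (p - 1) / 2)) *
            jb (s - τ) ^ (-q + p / 2 - 1 - γ) * jb ((3*τ - s)/2) ^ (-(κ*p))) := by
          rw [hphi]; ring
      _ ≤ ((2:ℝ)^(p/2) * jb s ^ (-(p/2))) * (jb τ ^ (-(μ * (p - 1) / 2)) *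
            jb (s - τ) ^ (-q + p / 2 - 1 - γ) * jb ((3*τ - s)/2) ^ (-(κ*p))) :=
          mul_le_mul_of_nonneg_right hsb hgnn
  -- integrate
  have step1 : (∫ τ in (0:ℝ)..s, jb τ ^ (-(μ * (p - 1) / 2)) *
        jb (s - τ) ^ (-q + p / 2 - 1 - γ) * phi κ τ ((s - τ) / 2) ^ p)
      ≤ ((2:ℝ)^(p/2) * jb s ^ (-(p/2))) * ∫ τ in (0:ℝ)..s, jb τ ^ (-(μ * (p - 1) / 2)) *
          jb (s - τ) ^ (-q + p / 2 - 1 - γ) * jb ((3*τ - s)/2) ^ (-(κ*p)) := by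
    rw [← intervalIntegral.integral_const_mul]
    exact intervalIntegral.integral_mono_on hs (hφcont.intervalIntegrable _ _)
      ((continuous_const.mul hgcont).intervalIntegrable _ _) hpt
  have hsplit : (∫ τ in (0:ℝ)..s, jb τ ^ (-(μ * (p - 1) / 2)) *
        jb (s - τ) ^ (-q + p / 2 - 1 - γ) * jb ((3*τ - s)/2) ^ (-(κ*p)))
      = (∫ τ in (0:ℝ)..(s/3), jb τ ^ (-(μ * (p - 1) / 2)) *
          jb (s - τ) ^ (-q + p / 2 - 1 - γ) * jb ((3*τ - s)/2) ^ (-(κ*p)))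
        + ∫ τ in (s/3)..s, jb τ ^ (-(μ * (p - 1) / 2)) *
            jb (s - τ) ^ (-q + p / 2 - 1 - γ) * jb ((3*τ - s)/2) ^ (-(κ*p)) :=
    (intervalIntegral.integral_add_adjacent_intervals
      (hgcont.intervalIntegrable _ _) (hgcont.intervalIntegrable _ _)).symm
  have hAs := hA s hs
  have hBs := hB2 s hs
  -- final combination
  have Zc : ∀ f : ℝ, -(p/2) + f ≤ -κ - γ → jb s ^ (-(p/2)) * jb s ^ f ≤ jb s ^ (-κ - γ) := by
    intro f hf
    rw [← Real.rpow_add (jb_pos s)]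
    exact Real.rpow_le_rpow_of_exponent_le (one_le_jb s) hf
  have hZ1 := Zc _ hf1
  have hZ2 := Zc _ hf2
  have hZ3 := Zc _ hf3
  have hZ4 := Zc _ hf4
  have hpnn : (0:ℝ) ≤ (2:ℝ)^(p/2) := Real.rpow_nonneg (by norm_num) _
  have hjnn : (0:ℝ) ≤ jb s ^ (-(p/2)) := Real.rpow_nonneg (jb_pos s).le _
  refine step1.trans ?_
  rw [hsplit]
  calc ((2:ℝ)^(p/2) * jb s ^ (-(p/2))) * ((∫ τ in (0:ℝ)..(s/3), jb τ ^ (-(μ * (p - 1) / 2)) *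
          jb (s - τ) ^ (-q + p / 2 - 1 - γ) * jb ((3*τ - s)/2) ^ (-(κ*p)))
        + ∫ τ in (s/3)..s, jb τ ^ (-(μ * (p - 1) / 2)) *
            jb (s - τ) ^ (-q + p / 2 - 1 - γ) * jb ((3*τ - s)/2) ^ (-(κ*p)))
      ≤ ((2:ℝ)^(p/2) * jb s ^ (-(p/2))) *
          ((K1 * (jb s ^ ((-q + p / 2 - 1 - γ) - κ*p + max (1 - μ * (p - 1) / 2) δ)
              + jb s ^ ((-q + p / 2 - 1 - γ) - μ * (p - 1) / 2 + max (1 - κ*p) δ)))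
            + (K2 * (jb s ^ (-(μ * (p - 1) / 2) + (-q + p / 2 - 1 - γ) + max (1 - κ*p) δ)
              + jb s ^ (-(μ * (p - 1) / 2) - κ*p + max (1 + (-q + p / 2 - 1 - γ)) δ)))) := by
        apply mul_le_mul_of_nonneg_left (add_le_add hAs hBs) (mul_nonneg hpnn hjnn)
    _ = (2:ℝ)^(p/2) * (K1 * (jb s ^ (-(p/2)) * jb s ^ ((-q + p / 2 - 1 - γ) - κ*p + max (1 - μ * (p - 1) / 2) δ)
              + jb s ^ (-(p/2)) * jb s ^ ((-q + p / 2 - 1 - γ) - μ * (p - 1) / 2 + max (1 - κ*p) δ))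
            + K2 * (jb s ^ (-(p/2)) * jb s ^ (-(μ * (p - 1) / 2) + (-q + p / 2 - 1 - γ) + max (1 - κ*p) δ)
              + jb s ^ (-(p/2)) * jb s ^ (-(μ * (p - 1) / 2) - κ*p + max (1 + (-q + p / 2 - 1 - γ)) δ))) := by
        ring
    _ ≤ (2:ℝ)^(p/2) * (K1 * (jb s ^ (-κ - γ) + jb s ^ (-κ - γ))
            + K2 * (jb s ^ (-κ - γ) + jb s ^ (-κ - γ))) := by
        apply mul_le_mul_of_nonneg_left _ hpnn
        exact add_le_add
          (mul_le_mul_of_nonneg_left (add_le_add hZ1 hZ2) hK1.le)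
          (mul_le_mul_of_nonneg_left (add_le_add hZ3 hZ4) hK2.le)
    _ = ((2:ℝ)^(p/2) * (2*K1 + 2*K2)) * jb s ^ (-κ - γ) := by ring

/-- Proposition 3.9, estimate for `P_γ(t,r)`. -/
theorem estimate_P_gamma (n : ℕ) (hn : 4 ≤ n) (hne : Even n)
    (μ : ℝ) (hμ : 0 < μ) (p κ q γ : ℝ)
    (hp₁ : p0 ((n : ℝ) + μ) < p) (hp₂ : p < pFuj (((n : ℝ) + μ - 1) / 2))
    (hκ₁ : 0 < κ) (hκ₂ : κ ≤ ((n : ℝ) + μ - 1) * p / 2 - ((n : ℝ) + μ + 1) / 2)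
    (hκ₃ : κ > 2 / (p - 1) - ((n : ℝ) + μ - 1) / 2)
    (hq : q = ((n : ℝ) - 1) * p / 2 - ((n : ℝ) + 1) / 2)
    (hq₀ : -(1 / 2 : ℝ) ≤ q) (hq₁ : q ≤ ((n : ℝ) - 3) / 2)
    (hpμ : p < pFuj μ) (hγ : γ = 0 ∨ γ = 1 / 2) :
    ∃ C > 0, ∀ t : ℝ, 0 ≤ t → ∀ r : ℝ, 0 < r →
      (∫ τ in (0 : ℝ)..(max (t - r) 0),
          jb τ ^ (-(μ * (p - 1) / 2)) * jb (t - τ - r) ^ (-q + p / 2 - 1 - γ) *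
            phi κ τ ((t - τ - r) / 2) ^ p) ≤
        C * jb (t - r) ^ (-κ - γ) := by
  have hn4 : (4:ℝ) ≤ (n:ℝ) := by exact_mod_cast hn
  have hp : 1 < p := by nlinarith
  have hκqa : κ ≤ q + μ * (p - 1) / 2 := by
    have he : ((n : ℝ) + μ - 1) * p / 2 - ((n : ℝ) + μ + 1) / 2 = q + μ * (p - 1) / 2 := by
      rw [hq]; ring
    linarith [hκ₂, he.symm.le]
  have hγ0 : 0 ≤ γ := by rcases hγ with h | h <;> rw [h] <;> norm_num
  have hγ1 : γ ≤ 1/2 := by rcases hγ with h | h <;> rw [h] <;> norm_num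
  obtain ⟨C, hC0, hKey⟩ := key μ p κ q γ hμ hp hκ₁ hκqa hq₀ hγ0 hγ1
  refine ⟨C, hC0, ?_⟩
  intro t _ r _
  rcases le_or_gt t r with h | h
  · rw [max_eq_right (by linarith), intervalIntegral.integral_same]
    exact mul_nonneg hC0.le (Real.rpow_nonneg (jb_pos _).le _)
  · rw [max_eq_left (by linarith)]
    have heq : (∫ τ in (0 : ℝ)..(t - r),
        jb τ ^ (-(μ * (p - 1) / 2)) * jb (t - τ - r) ^ (-q + p / 2 - 1 - γ) *
          phi κ τ ((t - τ - r) / 2) ^ p)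
        = ∫ τ in (0 : ℝ)..(t - r),
        jb τ ^ (-(μ * (p - 1) / 2)) * jb ((t - r) - τ) ^ (-q + p / 2 - 1 - γ) *
          phi κ τ (((t - r) - τ) / 2) ^ p := by
      apply intervalIntegral.integral_congr
      intro τ _
      show jb τ ^ (-(μ * (p - 1) / 2)) * jb (t - τ - r) ^ (-q + p / 2 - 1 - γ) *
          phi κ τ ((t - τ - r) / 2) ^ p
        = jb τ ^ (-(μ * (p - 1) / 2)) * jb ((t - r) - τ) ^ (-q + p / 2 - 1 - γ) *
          phi κ τ (((t - r) - τ) / 2) ^ p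
      rw [show t - τ - r = (t - r) - τ by ring]
    rw [heq]
    exact hKey (t - r) (by linarith)
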